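/- Let G be a graph, S ⊆ V(G), q,r ≥ 2 integers, and λ a layering of G. For m ∈ {0,…,r−1} let (G_m,S_m) be the (λ,r,m)-stratification of G. Then there exists m ∈ {0,…,r−1} with χ'_q(G_m, S ∪ S_m) ≥ (1 − 6q/r)·χ'_q(G,S). -/

import Mathlib

open Finset

variable {V : Type*}

/-- The set of colours appearing on edges incident to vertex `v`. -/
def vColors (G : SimpleGraph V) (f : V → V → ℕ) (v : V) : Set ℕ :=
  {c | ∃ u, G.Adj v u ∧ f v u = c}

/-- The set of colours used on edges of `G`. -/
def colorsOf (G : SimpleGraph V) (f : V → V → ℕ) : Set ℕ :=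
  {c | ∃ u v, G.Adj u v ∧ f u v = c}

/-- An edge `q`-colouring: a symmetric assignment of colours to edges such that
every vertex is incident with at most `q` distinct colours. -/
def IsEdgeQColoring (G : SimpleGraph V) (q : ℕ) (f : V → V → ℕ) : Prop :=
  (∀ u v, f u v = f v u) ∧ ∀ v, (vColors G f v).ncard ≤ q

/-- `S`-composability: every vertex of `S` sees at most `q - 1` non-zero colours. -/
def IsComposable (G : SimpleGraph V) (q : ℕ) (S : Set V) (f : V → V → ℕ) : Prop :=
  ∀ v ∈ S, ((vColors G f v) \ {0}).ncard ≤ q - 1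

/-- `χ'_q(G, S)`: maximum number of non-zero colours of an `S`-composable edge
`q`-colouring of `G`. -/
noncomputable def chiq (G : SimpleGraph V) (q : ℕ) (S : Set V) : ℕ :=
  sSup {k | ∃ f, IsEdgeQColoring G q f ∧ IsComposable G q S f ∧
    ((colorsOf G f) \ {0}).ncard = k}

/-- `χ'_q(G)`: maximum number of distinct colours of an edge `q`-colouring of `G`. -/
noncomputable def chimax (G : SimpleGraph V) (q : ℕ) : ℕ :=
  sSup {k | ∃ f, IsEdgeQColoring G q f ∧ (colorsOf G f).ncard = k}

/-- `M` is a matching in `G`: a set of edges, pairwise not sharing a vertex. -/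
def IsMatchingSet (G : SimpleGraph V) (M : Set (Sym2 V)) : Prop :=
  M ⊆ G.edgeSet ∧ ∀ e ∈ M, ∀ e' ∈ M, e ≠ e' → ∀ v, v ∈ e → v ∉ e'

/-- `M` is a maximal matching in `G`. -/
def IsMaximalMatchingSet (G : SimpleGraph V) (M : Set (Sym2 V)) : Prop :=
  IsMatchingSet G M ∧ ∀ e ∈ G.edgeSet, ∃ e' ∈ M, ∃ v, v ∈ e ∧ v ∈ e'

/-- `X` is a vertex cover of `G`. -/
def IsVertexCover (G : SimpleGraph V) (X : Set V) : Prop :=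
  ∀ e ∈ G.edgeSet, ∃ v ∈ X, v ∈ e

/-- A layering of `G`. -/
def IsLayering (G : SimpleGraph V) (lam : V → ℤ) : Prop :=
  ∀ u v, G.Adj u v → |lam u - lam v| ≤ 1

/-- The graph part `G_m` of the `(λ, r, m)`-stratification: delete all edges `uv`
with `λ(u) ≡ m` and `λ(v) ≡ m + 1 (mod r)`. -/
def stratGraph (G : SimpleGraph V) (lam : V → ℤ) (r m : ℤ) : SimpleGraph V where
  Adj u v := G.Adj u v ∧
    ¬ ((lam u ≡ m [ZMOD r] ∧ lam v ≡ m + 1 [ZMOD r]) ∨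
       (lam v ≡ m [ZMOD r] ∧ lam u ≡ m + 1 [ZMOD r]))
  symm := by
    constructor
    intro u v h
    exact ⟨h.1.symm, fun hc => h.2 hc.symm⟩
  loopless := ⟨fun v h => G.loopless.irrefl v h.1⟩

/-- The set `S_m` of the `(λ, r, m)`-stratification: vertices incident with deleted
edges. -/
def stratSet (G : SimpleGraph V) (lam : V → ℤ) (r m : ℤ) : Set V :=
  {v | ∃ u, G.Adj v u ∧ ¬ (stratGraph G lam r m).Adj v u}

/-!
Fix an optimal colouring `f` witnessing `χ'_q(G, S)`. Giving each edge of a maximal matching its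
own non-zero colour (all other edges colour `0`) is again admissible, so the matched vertices form
a vertex cover `W` with `|W| ≤ 2 χ'_q(G, S)`. Every edge deleted in `G_m` has both endpoints in
layers `≡ m` or `≡ m + 1 (mod r)`, and one of them in `W`; a vertex lies in such a window for at
most two values of `m`, so for some `m` the set `T` of window vertices of `W` has
`r |T| ≤ 4 χ'_q(G, S)`. Recolouring by `0` every edge whose colour is seen at `T` costs at most
`q |T|` colours, and the result is `(S ∪ S_m)`-composable on `G_m`: a vertex of `S_m` has lost
the colour of its deleted edge.
-/

section Colorings

variable {G : SimpleGraph V} {q : ℕ} {S : Set V} {f : V → V → ℕ}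

lemma vColors_finite [Finite V] (G : SimpleGraph V) (f : V → V → ℕ) (v : V) :
    (vColors G f v).Finite :=
  (Set.finite_range (f v)).subset fun _ ⟨u, _, hu⟩ => ⟨u, hu⟩

lemma colorsOf_finite [Finite V] (G : SimpleGraph V) (f : V → V → ℕ) :
    (colorsOf G f).Finite :=
  (Set.finite_range fun p : V × V => f p.1 p.2).subset fun _ ⟨u, v, _, h⟩ => ⟨(u, v), h⟩

lemma ncard_vColors_le_ncard_sdiff_zero_add_one [Finite V] (G : SimpleGraph V)
    (f : V → V → ℕ) (v : V) : (vColors G f v).ncard ≤ (vColors G f v \ {0}).ncard + 1 := by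
  simpa using Set.ncard_le_ncard_sdiff_add_ncard (vColors G f v) {0}

lemma isEdgeQColoring_of_ncard_sdiff_zero_le [Finite V] (hsymm : ∀ u v, f u v = f v u)
    (hq : 1 ≤ q) (hf : ∀ v, (vColors G f v \ {0}).ncard ≤ q - 1) : IsEdgeQColoring G q f :=
  ⟨hsymm, fun v => by have := ncard_vColors_le_ncard_sdiff_zero_add_one G f v; grind⟩

lemma bddAbove_chiq [Finite V] (G : SimpleGraph V) (q : ℕ) (S : Set V) :
    BddAbove {k | ∃ f, IsEdgeQColoring G q f ∧ IsComposable G q S f ∧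
      ((colorsOf G f) \ {0}).ncard = k} := by
  refine ⟨Nat.card (V × V), ?_⟩
  rintro _ ⟨f, -, -, rfl⟩
  have hsub : colorsOf G f \ {0} ⊆ (fun p : V × V => f p.1 p.2) '' Set.univ :=
    fun _ ⟨⟨u, v, _, h⟩, _⟩ => ⟨(u, v), trivial, h⟩
  calc (colorsOf G f \ {0}).ncard ≤ ((fun p : V × V => f p.1 p.2) '' Set.univ).ncard :=
        Set.ncard_le_ncard hsub
    _ ≤ Nat.card (V × V) := (Set.ncard_image_le).trans (Set.ncard_univ _).le

lemma le_chiq [Finite V] (hf : IsEdgeQColoring G q f) (hfS : IsComposable G q S f) :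
    (colorsOf G f \ {0}).ncard ≤ chiq G q S :=
  le_csSup (bddAbove_chiq G q S) ⟨f, hf, hfS, rfl⟩

lemma exists_ncard_colorsOf_eq_chiq [Finite V] (G : SimpleGraph V) (S : Set V) (hq : 1 ≤ q) :
    ∃ f, IsEdgeQColoring G q f ∧ IsComposable G q S f ∧
      (colorsOf G f \ {0}).ncard = chiq G q S := by
  have hzero : ∀ v, (vColors G (fun _ _ => 0) v \ {0}).ncard ≤ q - 1 := fun v => by
    have : vColors G (fun _ _ => 0) v ⊆ {0} := by rintro c ⟨u, -, rfl⟩; rfl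
    simp [Set.sdiff_eq_empty.2 this]
  have hzero' : colorsOf G (fun _ _ => 0) \ {0} = ∅ :=
    Set.sdiff_eq_empty.2 (by rintro c ⟨u, v, -, rfl⟩; rfl)
  exact Nat.sSup_mem (s := {k | ∃ f, IsEdgeQColoring G q f ∧ IsComposable G q S f ∧
      (colorsOf G f \ {0}).ncard = k})
    ⟨0, fun _ _ => 0, isEdgeQColoring_of_ncard_sdiff_zero_le (fun _ _ => rfl) hq hzero,
      fun v _ => hzero v, by simp [hzero']⟩ (bddAbove_chiq G q S)

end Colorings

section Matching

open SimpleGraph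

variable {G : SimpleGraph V}

open Classical in
noncomputable def matchingColoring (M : G.Subgraph) (e : Sym2 V → ℕ) : V → V → ℕ :=
  fun u v => if M.Adj u v then e s(u, v) + 1 else 0

lemma matchingColoring_comm (M : G.Subgraph) (e : Sym2 V → ℕ) (u v : V) :
    matchingColoring M e u v = matchingColoring M e v u := by
  unfold matchingColoring
  rw [M.adj_comm, Sym2.eq_swap]

lemma ncard_vColors_matchingColoring_sdiff_zero_le_one [Finite V] {M : G.Subgraph}
    (hM : M.IsMatching) (e : Sym2 V → ℕ) (v : V) :
    (vColors G (matchingColoring M e) v \ {0}).ncard ≤ 1 := by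
  have hadj : ∀ c ∈ vColors G (matchingColoring M e) v \ {0},
      ∃ w, M.Adj v w ∧ c = e s(v, w) + 1 := by
    rintro c ⟨⟨w, -, rfl⟩, hc⟩
    by_cases h : M.Adj v w
    · exact ⟨w, h, by simp [matchingColoring, h]⟩
    · simp [matchingColoring, h] at hc
  refine (Set.ncard_le_one ((vColors_finite G _ v).sdiff)).2 fun a ha b hb => ?_
  obtain ⟨w₁, h₁, rfl⟩ := hadj a ha
  obtain ⟨w₂, h₂, rfl⟩ := hadj b hb
  rw [hM.eq_of_adj_left h₁ h₂]

lemma ncard_edgeSet_le_ncard_colorsOf_matchingColoring [Finite V] (M : G.Subgraph)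
    {e : Sym2 V → ℕ} (he : e.Injective) :
    M.edgeSet.ncard ≤ (colorsOf G (matchingColoring M e) \ {0}).ncard := by
  have hsub : (fun x => e x + 1) '' M.edgeSet ⊆ colorsOf G (matchingColoring M e) \ {0} := by
    rintro _ ⟨x, hx, rfl⟩
    induction x using Sym2.ind with
    | h u v =>
      have hc : matchingColoring M e u v = e s(u, v) + 1 := by
        simp [matchingColoring, (M.mem_edgeSet).1 hx]
      exact ⟨⟨u, v, M.adj_sub hx, hc⟩, by simp⟩
  rw [← Set.ncard_image_of_injective _ (add_left_injective 1 |>.comp he)]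
  exact Set.ncard_le_ncard hsub ((colorsOf_finite G _).sdiff)

lemma SimpleGraph.Subgraph.IsMatching.ncard_verts_le [Finite V] {M : G.Subgraph}
    (hM : M.IsMatching) :
    M.verts.ncard ≤ 2 * M.edgeSet.ncard := by
  have hfin : M.edgeSet.Finite := Set.toFinite _
  have hedge : ∀ x : Sym2 V, (x : Set V).ncard ≤ 2 := fun x => by
    induction x using Sym2.ind with
    | h u v => simpa using (Set.ncard_insert_le u {v}).trans (by simp)
  calc M.verts.ncard = (⋃ x ∈ hfin.toFinset, (x : Set V)).ncard := by
        rw [hM.verts_eq_biUnion_edgeSet]; simp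
    _ ≤ ∑ x ∈ hfin.toFinset, (x : Set V).ncard := Finset.set_ncard_biUnion_le _ _
    _ ≤ ∑ _x ∈ hfin.toFinset, 2 := Finset.sum_le_sum fun x _ => hedge x
    _ = 2 * M.edgeSet.ncard := by
        rw [Finset.sum_const, smul_eq_mul, mul_comm, Set.ncard_eq_toFinset_card]

lemma exists_isMatching_isVertexCover [Finite V] (G : SimpleGraph V) :
    ∃ M : G.Subgraph, M.IsMatching ∧ G.IsVertexCover M.verts := by
  obtain ⟨M, -, hmax⟩ := Finite.exists_le_maximal (p := Subgraph.IsMatching)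
    (a := (⊥ : G.Subgraph)) fun _ hv => hv.elim
  refine ⟨M, hmax.prop, fun u v hx => ?_⟩
  by_contra! hcov
  obtain ⟨hu, hv⟩ := hcov
  have hdisj : Disjoint M.support (G.subgraphOfAdj hx).support := by
    refine Set.disjoint_left.2 fun w hwM hw => ?_
    have hw' : w = u ∨ w = v := by simpa using Subgraph.support_subset_verts _ hw
    rcases hw' with rfl | rfl
    exacts [hu (M.support_subset_verts hwM), hv (M.support_subset_verts hwM)]
  have hle := hmax.2 (hmax.prop.sup (Subgraph.IsMatching.subgraphOfAdj hx) hdisj) le_sup_left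
  exact hu (hle.1 (Or.inr (by simp)))

lemma exists_isVertexCover_card_le_two_mul_chiq [Fintype V] (G : SimpleGraph V) (S : Set V)
    {q : ℕ} (hq : 2 ≤ q) : ∃ W : Finset V, G.IsVertexCover W ∧ #W ≤ 2 * chiq G q S := by
  classical
  obtain ⟨M, hM, hcov⟩ := exists_isMatching_isVertexCover G
  obtain ⟨e, he⟩ := Countable.exists_injective_nat (Sym2 V)
  have hone := ncard_vColors_matchingColoring_sdiff_zero_le_one hM e
  have hcol : (colorsOf G (matchingColoring M e) \ {0}).ncard ≤ chiq G q S :=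
    le_chiq (S := S) (isEdgeQColoring_of_ncard_sdiff_zero_le (matchingColoring_comm M e)
      (by omega) fun v => (hone v).trans (by omega)) fun v _ => (hone v).trans (by omega)
  refine ⟨M.verts.toFinset, by simpa using hcov, ?_⟩
  rw [← Set.ncard_eq_toFinset_card']
  have := ncard_edgeSet_le_ncard_colorsOf_matchingColoring M he
  have := hM.ncard_verts_le
  omega

end Matching

section Recoloring

variable {G H : SimpleGraph V} {q : ℕ} {S : Set V} {f : V → V → ℕ} {B : Set ℕ}

open Classical in
noncomputable def eraseColors (f : V → V → ℕ) (B : Set ℕ) : V → V → ℕ :=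
  fun u v => if f u v ∈ B then 0 else f u v

lemma eraseColors_of_notMem {u v : V} (h : f u v ∉ B) : eraseColors f B u v = f u v := by
  simp [eraseColors, h]

lemma vColors_eraseColors_sdiff_zero_subset (hHG : H ≤ G) (v : V) :
    vColors H (eraseColors f B) v \ {0} ⊆ (vColors G f v \ {0}) \ B := by
  rintro _ ⟨⟨u, hvu, rfl⟩, h0⟩
  by_cases h : f v u ∈ B
  · simp [eraseColors, h] at h0
  · rw [eraseColors_of_notMem h] at h0 ⊢
    exact ⟨⟨⟨u, hHG hvu, rfl⟩, h0⟩, h⟩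

lemma isEdgeQColoring_eraseColors [Finite V] (hf : IsEdgeQColoring G q f) (hHG : H ≤ G)
    (B : Set ℕ) : IsEdgeQColoring H q (eraseColors f B) := by
  refine ⟨fun u v => by unfold eraseColors; rw [hf.1 u v], fun v => ?_⟩
  by_cases hB : ∃ u, H.Adj v u ∧ f v u ∈ B
  · -- the erased colour `f v u₀` makes room for the new colour `0`
    obtain ⟨u₀, hvu₀, hu₀⟩ := hB
    have hmem : f v u₀ ∈ vColors G f v := ⟨u₀, hHG hvu₀, rfl⟩
    have hsub : vColors H (eraseColors f B) v ⊆ insert 0 (vColors G f v \ {f v u₀}) := by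
      rintro _ ⟨u, hvu, rfl⟩
      by_cases h : f v u ∈ B
      · simp [eraseColors, h]
      · rw [eraseColors_of_notMem h]
        exact Or.inr ⟨⟨u, hHG hvu, rfl⟩, fun he => h (he ▸ hu₀)⟩
    have hpos := (Set.ncard_pos (vColors_finite G f v)).2 ⟨_, hmem⟩
    have := (Set.ncard_le_ncard hsub ((vColors_finite G f v).sdiff.insert 0)).trans
      (Set.ncard_insert_le _ _)
    rw [Set.ncard_sdiff_singleton_of_mem hmem] at this
    have := hf.2 v
    omega
  · push Not at hB
    refine le_trans (Set.ncard_le_ncard ?_ (vColors_finite G f v)) (hf.2 v)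
    rintro _ ⟨u, hvu, rfl⟩
    rw [eraseColors_of_notMem (hB u hvu)]
    exact ⟨u, hHG hvu, rfl⟩

lemma isComposable_eraseColors [Finite V] (hf : IsEdgeQColoring G q f)
    (hfS : IsComposable G q S f) (hHG : H ≤ G)
    (hB : ∀ u v, G.Adj u v → ¬ H.Adj u v → f u v ∈ B) :
    IsComposable H q (S ∪ {v | ∃ u, G.Adj v u ∧ ¬ H.Adj v u}) (eraseColors f B) := by
  rintro v (hv | ⟨u, hvu, hHvu⟩)
  · exact (Set.ncard_le_ncard ((vColors_eraseColors_sdiff_zero_subset hHG v).trans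
      Set.sdiff_subset) (vColors_finite G f v).sdiff).trans (hfS v hv)
  · have hmem : f v u ∈ vColors G f v := ⟨u, hvu, rfl⟩
    -- the colour of the deleted edge `vu` is erased, so `v` loses it
    have hsub : vColors H (eraseColors f B) v \ {0} ⊆ vColors G f v \ {f v u} :=
      fun c hc =>
        have ⟨⟨hc, _⟩, hcB⟩ := vColors_eraseColors_sdiff_zero_subset hHG v hc
        ⟨hc, fun he => hcB (he ▸ hB v u hvu hHvu)⟩
    have := Set.ncard_le_ncard hsub (vColors_finite G f v).sdiff
    rw [Set.ncard_sdiff_singleton_of_mem hmem] at this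
    have := hf.2 v
    omega

lemma colorsOf_sdiff_zero_subset_eraseColors
    (hB : ∀ u v, G.Adj u v → ¬ H.Adj u v → f u v ∈ B) :
    colorsOf G f \ {0} ⊆ (colorsOf H (eraseColors f B) \ {0}) ∪ B := by
  rintro _ ⟨⟨u, v, huv, rfl⟩, h0⟩
  by_cases h : f u v ∈ B
  · exact Or.inr h
  · have hH : H.Adj u v := by_contra fun hH => h (hB u v huv hH)
    exact Or.inl ⟨⟨u, v, hH, eraseColors_of_notMem h⟩, h0⟩

lemma ncard_colorsOf_le_chiq_add [Finite V] (hf : IsEdgeQColoring G q f)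
    (hfS : IsComposable G q S f) (hHG : H ≤ G) (T : Finset V)
    (hT : ∀ u v, G.Adj u v → ¬ H.Adj u v → u ∈ T ∨ v ∈ T) :
    (colorsOf G f \ {0}).ncard ≤
      chiq H q (S ∪ {v | ∃ u, G.Adj v u ∧ ¬ H.Adj v u}) + q * #T := by
  set B := ⋃ x ∈ T, vColors G f x
  have hBfin : B.Finite := T.finite_toSet.biUnion fun x _ => vColors_finite G f x
  have hB : ∀ u v, G.Adj u v → ¬ H.Adj u v → f u v ∈ B := fun u v huv hH => by
    rcases hT u v huv hH with hu | hv
    · exact Set.mem_biUnion hu ⟨v, huv, rfl⟩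
    · exact Set.mem_biUnion hv ⟨u, huv.symm, hf.1 v u⟩
  have hBcard : B.ncard ≤ q * #T :=
    calc B.ncard ≤ ∑ x ∈ T, (vColors G f x).ncard := T.set_ncard_biUnion_le _
      _ ≤ ∑ _x ∈ T, q := Finset.sum_le_sum fun x _ => hf.2 x
      _ = q * #T := by rw [Finset.sum_const, smul_eq_mul, mul_comm]
  calc (colorsOf G f \ {0}).ncard ≤ ((colorsOf H (eraseColors f B) \ {0}) ∪ B).ncard :=
        Set.ncard_le_ncard (colorsOf_sdiff_zero_subset_eraseColors hB)
          ((colorsOf_finite H _).sdiff.union hBfin)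
    _ ≤ (colorsOf H (eraseColors f B) \ {0}).ncard + B.ncard := Set.ncard_union_le _ _
    _ ≤ _ := add_le_add
      (le_chiq (isEdgeQColoring_eraseColors hf hHG B) (isComposable_eraseColors hf hfS hHG hB))
      hBcard

end Recoloring

section Stratification

abbrev InLayerWindow (lam : V → ℤ) (r m : ℤ) (x : V) : Prop :=
  lam x ≡ m [ZMOD r] ∨ lam x ≡ m + 1 [ZMOD r]

lemma card_filter_inLayerWindow_le_two (lam : V → ℤ) (r : ℤ) (x : V) :
    #{m ∈ Ico 0 r | InLayerWindow lam r m x} ≤ 2 := by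
  refine (card_le_card (t := {lam x % r, (lam x - 1) % r}) fun m hm => ?_).trans card_le_two
  obtain ⟨hm, h | h⟩ := mem_filter.1 hm
  all_goals
    obtain ⟨hm0, hmr⟩ := mem_Ico.1 hm
    have hmm : m % r = m := Int.emod_eq_of_lt hm0 hmr
    simp only [Int.ModEq] at h
    simp only [mem_insert, mem_singleton]
  · omega
  · right
    rw [← hmm, Int.sub_emod, h, ← Int.sub_emod]
    simp

lemma exists_inLayerWindow_card_le (W : Finset V) (lam : V → ℤ) {r : ℤ} (hr : 0 < r) :
    ∃ m, 0 ≤ m ∧ m < r ∧ r * #{x ∈ W | InLayerWindow lam r m x} ≤ 2 * #W := by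
  have hsum : ∑ m ∈ Ico 0 r, #{x ∈ W | InLayerWindow lam r m x} ≤ 2 * #W :=
    calc _ = ∑ x ∈ W, #{m ∈ Ico 0 r | InLayerWindow lam r m x} :=
          sum_card_bipartiteAbove_eq_sum_card_bipartiteBelow _
      _ ≤ ∑ _x ∈ W, 2 := sum_le_sum fun x _ => card_filter_inLayerWindow_le_two lam r x
      _ = 2 * #W := by rw [sum_const, smul_eq_mul, mul_comm]
  obtain ⟨m, hm, hle⟩ := exists_le_of_sum_le (s := Ico 0 r)
    (f := fun m => r * (#{x ∈ W | InLayerWindow lam r m x} : ℤ))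
    (g := fun _ => 2 * (#W : ℤ)) ⟨0, by simpa using hr⟩ (by
      rw [← mul_sum, sum_const, Int.card_Ico, sub_zero, nsmul_eq_mul, Int.toNat_of_nonneg hr.le]
      exact mul_le_mul_of_nonneg_left (by exact_mod_cast hsum) hr.le)
  obtain ⟨hm0, hmr⟩ := mem_Ico.1 hm
  exact ⟨m, hm0, hmr, hle⟩

lemma stratGraph_le (G : SimpleGraph V) (lam : V → ℤ) (r m : ℤ) :
    stratGraph G lam r m ≤ G :=
  fun _ _ h => h.1

lemma inLayerWindow_of_not_stratGraph_adj {G : SimpleGraph V} {lam : V → ℤ} {r m : ℤ}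
    {u v : V} (huv : G.Adj u v) (h : ¬ (stratGraph G lam r m).Adj u v) :
    InLayerWindow lam r m u ∧ InLayerWindow lam r m v := by
  have := not_not.1 fun hc => h ⟨huv, hc⟩
  tauto

end Stratification

lemma one_sub_div_mul_le_of_le_add_mul {k C q t r : ℝ} (hr : 0 < r) (hq : 0 ≤ q) (hk0 : 0 ≤ k)
    (hk : k ≤ C + q * t) (ht : r * t ≤ 4 * k) : (1 - 6 * q / r) * k ≤ C := by
  have hqt : q * t ≤ 6 * q / r * k := by
    rw [div_mul_eq_mul_div, le_div_iff₀ hr]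
    nlinarith [mul_le_mul_of_nonneg_left ht hq, mul_nonneg hq hk0]
  linarith [show (1 - 6 * q / r) * k = k - 6 * q / r * k by ring]

theorem stmt8_general [Fintype V] (G : SimpleGraph V) (S : Set V) (q : ℕ) (hq : 2 ≤ q)
    (r : ℤ) (hr : 2 ≤ r) (lam : V → ℤ) :
    ∃ m : ℤ, 0 ≤ m ∧ m ≤ r - 1 ∧
      (1 - 6 * (q : ℝ) / (r : ℝ)) * (chiq G q S : ℝ) ≤
        (chiq (stratGraph G lam r m) q (S ∪ stratSet G lam r m) : ℝ) := by
  obtain ⟨f, hf, hfS, hfk⟩ := exists_ncard_colorsOf_eq_chiq G S (q := q) (by omega)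
  obtain ⟨W, hW, hWk⟩ := exists_isVertexCover_card_le_two_mul_chiq G S hq
  obtain ⟨m, hm0, hmr, hTW⟩ := exists_inLayerWindow_card_le W lam (by omega : 0 < r)
  refine ⟨m, hm0, by omega, ?_⟩
  set T := {x ∈ W | InLayerWindow lam r m x}
  have hcover : ∀ u v, G.Adj u v → ¬ (stratGraph G lam r m).Adj u v → u ∈ T ∨ v ∈ T :=
    fun u v huv h => by
      have := inLayerWindow_of_not_stratGraph_adj huv h
      rcases hW huv with hu | hv
      exacts [Or.inl (mem_filter.2 ⟨hu, this.1⟩), Or.inr (mem_filter.2 ⟨hv, this.2⟩)]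
  have hk : chiq G q S ≤ chiq (stratGraph G lam r m) q (S ∪ stratSet G lam r m) + q * #T :=
    hfk ▸ ncard_colorsOf_le_chiq_add hf hfS (stratGraph_le G lam r m) T hcover
  have hT : r * #T ≤ 4 * (chiq G q S : ℤ) := by
    have : (#W : ℤ) ≤ 2 * chiq G q S := by exact_mod_cast hWk
    linarith
  exact one_sub_div_mul_le_of_le_add_mul (t := #T) (by exact_mod_cast (by omega : 0 < r))
    (Nat.cast_nonneg q) (Nat.cast_nonneg _) (by exact_mod_cast hk) (by exact_mod_cast hT)

/-- some stratification loses only a `6q/r` fraction: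
`∃ m, χ'_q(G_m, S ∪ S_m) ≥ (1 − 6q/r) χ'_q(G, S)`. -/
theorem stmt8 [Fintype V] (G : SimpleGraph V) (S : Set V) (q : ℕ) (hq : 2 ≤ q)
    (r : ℤ) (hr : 2 ≤ r) (lam : V → ℤ) (hlam : IsLayering G lam) :
    ∃ m : ℤ, 0 ≤ m ∧ m ≤ r - 1 ∧
      (1 - 6 * (q : ℝ) / (r : ℝ)) * (chiq G q S : ℝ) ≤
        (chiq (stratGraph G lam r m) q (S ∪ stratSet G lam r m) : ℝ) :=
  stmt8_general G S q hq r hr lam
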